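/- (Pieri rule, combinatorial form) Let μ be a partition of length n and m a nonnegative integer. For a partition λ of length n with μ ⊆ λ and |λ| = |μ| + m, the product ∏_{i<j} (h̊_{ij}(μ) − ν_j)^{↑(ν_i+1)} / (h̊_{ij}(μ))^{↑(ν_i+1)} (with ν = λ − μ) is nonzero if and only if λ∖μ is a horizontal strip, i.e. λ_{i+1} ≤ μ_i for all i. -/

import Mathlib

/-!
The `(i, j)` factor has denominator `h̊ᵢⱼ(μ)^{↑(νᵢ+1)}` with `h̊ᵢⱼ(μ) ≥ j - i > 0`, so it vanishes
exactly when the rising factorial `x^{↑(νᵢ+1)}` with `x = h̊ᵢⱼ(μ) - νⱼ = μᵢ - λⱼ + (j - i)` hits `0`,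
i.e. when `x ≤ 0` and `-x ≤ νᵢ`. The second condition is `λⱼ ≤ λᵢ + (j - i)`, automatic for a
partition, so the product is nonzero iff `λⱼ < μᵢ + (j - i)` for all `i < j`. For `j = i + 1` this is
the horizontal strip condition, and it propagates to all `j > i` because `λ` is decreasing.
-/

open Finset

theorem prod_range_intCast_add_eq_zero_iff {K : Type*} [CommRing K] [IsDomain K] [CharZero K]
    (x : ℤ) (a : ℕ) : ∏ k ∈ range a, ((x : K) + k) = 0 ↔ x ≤ 0 ∧ -x < a := by
  rw [prod_eq_zero_iff]
  constructor
  · rintro ⟨k, hk, hzero⟩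
    have : x + k = 0 := by exact_mod_cast hzero
    rw [mem_range] at hk
    omega
  · rintro ⟨hx, hxa⟩
    refine ⟨(-x).toNat, mem_range.2 (by omega), ?_⟩
    have : x + ((-x).toNat : ℤ) = 0 := by omega
    exact_mod_cast this

theorem forall_add_lt_add_iff_forall_succ_le_of_antitone {n : ℕ} {μ lam : Fin n → ℕ}
    (hlam : Antitone lam) :
    (∀ i j : Fin n, i < j → lam j + i < μ i + j) ↔
      ∀ i j : Fin n, (j : ℕ) = i + 1 → lam j ≤ μ i := by
  constructor
  · intro h i j hj
    have := h i j (Fin.lt_def.2 (by omega))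
    omega
  · intro h i j hij
    have hi : (i : ℕ) + 1 < n := by omega
    have hstrip := h i ⟨i + 1, hi⟩ rfl
    have hmono := hlam (show (⟨i + 1, hi⟩ : Fin n) ≤ j from Fin.le_def.2 (Fin.lt_def.1 hij))
    omega

theorem pieri_product_ne_zero_iff_horizontal_strip_general (n : ℕ) (μ lam : Fin n → ℕ)
    (hμ : ∀ i j : Fin n, i ≤ j → μ j ≤ μ i)
    (hlam : ∀ i j : Fin n, i ≤ j → lam j ≤ lam i)
    (ν : Fin n → ℕ) (hν : ∀ i, (ν i : ℤ) = (lam i : ℤ) - (μ i : ℤ))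
    (hh : Fin n → Fin n → ℤ)
    (hhdef : ∀ i j, hh i j = ((μ i : ℤ) - ((i : ℕ) + 1)) - ((μ j : ℤ) - ((j : ℕ) + 1))) :
    (∏ p ∈ Finset.univ.filter (fun p : Fin n × Fin n => p.1 < p.2),
        (∏ k ∈ Finset.range (ν p.1 + 1), ((hh p.1 p.2 : ℚ) - (ν p.2 : ℚ) + (k : ℚ))) /
        (∏ k ∈ Finset.range (ν p.1 + 1), ((hh p.1 p.2 : ℚ) + (k : ℚ)))) ≠ 0 ↔
    (∀ i j : Fin n, (j : ℕ) = (i : ℕ) + 1 → lam j ≤ μ i) := by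
  rw [← forall_add_lt_add_iff_forall_succ_le_of_antitone fun i j h => hlam i j h, prod_ne_zero_iff]
  simp only [mem_filter, mem_univ, true_and, Prod.forall]
  refine forall₂_congr fun i j => forall_congr' fun hij => ?_
  have hnum : (hh i j : ℚ) - (ν j : ℚ) = ((hh i j - ν j : ℤ) : ℚ) := by push_cast; rfl
  rw [hnum, div_ne_zero_iff, Ne, Ne, prod_range_intCast_add_eq_zero_iff,
    prod_range_intCast_add_eq_zero_iff]
  have := hhdef i j
  have := hν i
  have := hν j
  have := hμ i j hij.le
  have := hlam i j hij.le
  have : (i : ℕ) < j := hij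
  omega

/-- Pieri rule, combinatorial form: for partitions `μ ⊆ λ` of length
`n` with `|λ| = |μ| + m` and `ν = λ − μ`, the product
`∏_{i<j} (h̊_{ij}(μ) − ν_j)^{↑(ν_i+1)} / (h̊_{ij}(μ))^{↑(ν_i+1)}` is nonzero iff
`λ∖μ` is a horizontal strip, i.e. `λ_{i+1} ≤ μ_i` for all `i`. -/
theorem pieri_product_ne_zero_iff_horizontal_strip (n m : ℕ) (μ lam : Fin n → ℕ)
    (hμ : ∀ i j : Fin n, i ≤ j → μ j ≤ μ i)
    (hlam : ∀ i j : Fin n, i ≤ j → lam j ≤ lam i)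
    (hsub : ∀ i, μ i ≤ lam i)
    (hsum : (∑ i, lam i) = (∑ i, μ i) + m)
    (ν : Fin n → ℕ) (hν : ∀ i, (ν i : ℤ) = (lam i : ℤ) - (μ i : ℤ))
    (hh : Fin n → Fin n → ℤ)
    (hhdef : ∀ i j, hh i j = ((μ i : ℤ) - ((i : ℕ) + 1)) - ((μ j : ℤ) - ((j : ℕ) + 1))) :
    (∏ p ∈ Finset.univ.filter (fun p : Fin n × Fin n => p.1 < p.2),
        (∏ k ∈ Finset.range (ν p.1 + 1), ((hh p.1 p.2 : ℚ) - (ν p.2 : ℚ) + (k : ℚ))) /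
        (∏ k ∈ Finset.range (ν p.1 + 1), ((hh p.1 p.2 : ℚ) + (k : ℚ)))) ≠ 0 ↔
    (∀ i j : Fin n, (j : ℕ) = (i : ℕ) + 1 → lam j ≤ μ i) :=
  pieri_product_ne_zero_iff_horizontal_strip_general n μ lam hμ hlam ν hν hh hhdef
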